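/- arXiv:1205.2742 — 4 statements merged into one kernel-verified Lean document; each statement's English description precedes it below -/
import Mathlib

section
/- If d is the largest real root of x³ − 2x² − x + 1, then 5 < d² < 3 + √5. -/
theorem stmt_2 (d : ℝ)
    (hroot : d ^ 3 - 2 * d ^ 2 - d + 1 = 0)
    (hmax : ∀ x : ℝ, x ^ 3 - 2 * x ^ 2 - x + 1 = 0 → x ≤ d) :
    5 < d ^ 2 ∧ d ^ 2 < 3 + Real.sqrt 5 := by
  have hcont : ContinuousOn (fun x : ℝ => x ^ 3 - 2 * x ^ 2 - x + 1) (Set.Icc 2.24 2.25) := by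
    fun_prop
  have hiv := intermediate_value_Icc (by norm_num : (2.24:ℝ) ≤ 2.25) hcont
  have hmem : (0:ℝ) ∈ Set.Icc ((2.24:ℝ)^3 - 2*2.24^2 - 2.24 + 1) (2.25^3 - 2*2.25^2 - 2.25 + 1) := by
    constructor <;> norm_num
  obtain ⟨c, hc, hcz⟩ := hiv hmem
  have hdc : c ≤ d := hmax c hcz
  have hd1 : (2.24:ℝ) ≤ d := le_trans hc.1 hdc
  have hd2 : d < 2.25 := by
    by_contra h
    push_neg at h
    nlinarith [sq_nonneg (d - 2.25), sq_nonneg d]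
  constructor
  · nlinarith
  · have hs : (2.236:ℝ) < Real.sqrt 5 := by
      rw [show (2.236:ℝ) = Real.sqrt (2.236^2) from (Real.sqrt_sq (by norm_num)).symm]
      exact Real.sqrt_lt_sqrt (by positivity) (by norm_num)
    nlinarith
end

section
/- Let d be the largest real root of x³ − 2x² − x + 1, let e = d² − d − 1, and set r₁ = d² − 4d + 3, r₂ = d² − 3d + 2, r₃ = d² − 3d + 1. Then the symmetric 3×3 matrix U with rows (1/d, √e/d, √d/d), (√e/d, e·r₁/d, √(e/d)·r₂), (√d/d, √(e/d)·r₂, r₃) satisfies U² = I; in particular U is a real orthogonal involution. -/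
/-!
Conjugating by `S = diag(1, √e, √d)` removes all square roots: `S U S⁻¹ = d⁻¹ M` with
`M = diag(1, e, d) · [[1, 1, 1], [1, r₁, r₂], [1, r₂, r₃]]`. So `U² = 1` amounts to `M² = d² · 1`,
whose entries are polynomial identities in `d` modulo the cubic. The cubic has a root in `(2, 3)`,
so its largest root exceeds `2`; hence `d` and `e` are positive and `S` is invertible.
-/

open Matrix

theorem mul_self_eq_one_of_semiconjBy {M : Type*} [Monoid M] {s u b : M} (hs : IsUnit s)
    (hsub : SemiconjBy s u b) (hb : b * b = 1) : u * u = 1 := by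
  have h := hsub.mul_right hsub
  rw [hb] at h
  exact hs.mul_left_cancel (by simpa [SemiconjBy] using h)

theorem two_lt_of_forall_root_le {d : ℝ}
    (hmax : ∀ x : ℝ, x ^ 3 - 2 * x ^ 2 - x + 1 = 0 → x ≤ d) : 2 < d := by
  have hcont : ContinuousOn (fun x : ℝ => x ^ 3 - 2 * x ^ 2 - x + 1) (Set.Icc 2 3) := by fun_prop
  obtain ⟨x, hx, hfx⟩ :=
    intermediate_value_Ioo (by norm_num) hcont (by norm_num : (0 : ℝ) ∈ Set.Ioo _ _)
  exact hx.1.trans_le (hmax x hfx)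

def connectionMatrix {R : Type*} [CommRing R] (d e r₁ r₂ r₃ : R) : Matrix (Fin 3) (Fin 3) R :=
  !![1, 1, 1; e, e * r₁, e * r₂; d, d * r₂, d * r₃]

theorem connectionMatrix_mul_self {R : Type*} [CommRing R] {d e r₁ r₂ r₃ : R}
    (hroot : d ^ 3 - 2 * d ^ 2 - d + 1 = 0) (he : e = d ^ 2 - d - 1)
    (hr₁ : r₁ = d ^ 2 - 4 * d + 3) (hr₂ : r₂ = d ^ 2 - 3 * d + 2) (hr₃ : r₃ = d ^ 2 - 3 * d + 1) :
    connectionMatrix d e r₁ r₂ r₃ * connectionMatrix d e r₁ r₂ r₃ = d ^ 2 • 1 := by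
  subst he hr₁ hr₂ hr₃
  ext i j
  fin_cases i <;> fin_cases j <;>
    simp [connectionMatrix, Matrix.mul_apply, Fin.sum_univ_three]
  · linear_combination (d - 2) * hroot
  · linear_combination (d - 1) * hroot
  · linear_combination (d ^ 2 - d - 1) * (d - 2) * hroot
  · linear_combination (d ^ 5 - 7 * d ^ 4 + 17 * d ^ 3 - 14 * d ^ 2 - 3 * d + 8) * hroot
  · linear_combination (d ^ 2 - d - 1) * (d ^ 3 - 5 * d ^ 2 + 8 * d - 5) * hroot
  · linear_combination d * (d - 1) * hroot
  · linear_combination d * (d ^ 3 - 5 * d ^ 2 + 8 * d - 5) * hroot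
  · linear_combination d * (d ^ 3 - 4 * d ^ 2 + 5 * d - 3) * hroot

theorem diagonal_sqrt_mul_eq_connectionMatrix_mul (d e r₁ r₂ r₃ : ℝ) (hd : 0 < d) (he : 0 ≤ e) :
    diagonal ![1, √e, √d] * Matrix.of
      ![![1 / d, √e / d, √d / d],
        ![√e / d, e * r₁ / d, √(e / d) * r₂],
        ![√d / d, √(e / d) * r₂, r₃]] =
      (d⁻¹ • connectionMatrix d e r₁ r₂ r₃) * diagonal ![1, √e, √d] := by
  have hsqd : √(e / d) = √e / √d := Real.sqrt_div he d
  have hse : √e ^ 2 = e := Real.sq_sqrt he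
  have hsd : √d ^ 2 = d := Real.sq_sqrt hd.le
  have : √d ≠ 0 := by positivity
  ext i j
  fin_cases i <;> fin_cases j <;>
    simp [connectionMatrix, hsqd] <;> field_simp
  all_goals grind

theorem stmt_10 (d e r₁ r₂ r₃ : ℝ)
    (hroot : d ^ 3 - 2 * d ^ 2 - d + 1 = 0)
    (hmax : ∀ x : ℝ, x ^ 3 - 2 * x ^ 2 - x + 1 = 0 → x ≤ d)
    (he : e = d ^ 2 - d - 1)
    (hr₁ : r₁ = d ^ 2 - 4 * d + 3)
    (hr₂ : r₂ = d ^ 2 - 3 * d + 2)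
    (hr₃ : r₃ = d ^ 2 - 3 * d + 1)
    (U : Matrix (Fin 3) (Fin 3) ℝ)
    (hU : U = Matrix.of
      ![![1 / d, Real.sqrt e / d, Real.sqrt d / d],
        ![Real.sqrt e / d, e * r₁ / d, Real.sqrt (e / d) * r₂],
        ![Real.sqrt d / d, Real.sqrt (e / d) * r₂, r₃]]) :
    U * U = 1 := by
  have hd : 2 < d := two_lt_of_forall_root_le hmax
  have he0 : 0 < e := by rw [he]; nlinarith
  have hS : IsUnit (diagonal ![1, √e, √d]) := by
    rw [isUnit_iff_isUnit_det, det_diagonal, Fin.prod_univ_three, isUnit_iff_ne_zero]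
    simp only [Matrix.cons_val]
    positivity
  have hB : (d⁻¹ • connectionMatrix d e r₁ r₂ r₃) * (d⁻¹ • connectionMatrix d e r₁ r₂ r₃) = 1 := by
    rw [smul_mul_smul, connectionMatrix_mul_self hroot he hr₁ hr₂ hr₃, smul_smul]
    field_simp
    simp
  subst hU
  exact mul_self_eq_one_of_semiconjBy hS
    (diagonal_sqrt_mul_eq_connectionMatrix_mul d e r₁ r₂ r₃ (by linarith) he0.le) hB
end

section
/- Let d be the largest real root of x³ − 2x² − x + 1, let e = d² − d − 1, and set r₁ = −d² + 2d + 1, r₂ = −d² + d + 2, r₃ = −d² + d + 3. Then the symmetric 3×3 matrix U with rows (1/d, √e/d, √d/d), (√e/d, e·r₁/d, √(e/d)·r₂), (√d/d, √(e/d)·r₂, r₃) satisfies U² = I. -/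
/-!
After `√e ^ 2 = e` and `√d ^ 2 = d`, every entry of `U * U` becomes a polynomial identity in `d`
that holds modulo the cubic. The only analytic input is that the largest root lies in `[2, 3]`,
which makes `d` and `e` positive so that the square roots behave.
-/

theorem exists_cubic_root_mem_Icc :
    ∃ x ∈ Set.Icc (2 : ℝ) 3, x ^ 3 - 2 * x ^ 2 - x + 1 = 0 := by
  have hcont : ContinuousOn (fun x : ℝ => x ^ 3 - 2 * x ^ 2 - x + 1) (Set.Icc 2 3) := by
    fun_prop
  exact intermediate_value_Icc (by norm_num) hcont ⟨by norm_num, by norm_num⟩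

theorem two_le_of_forall_cubic_root_le {d : ℝ}
    (hmax : ∀ x : ℝ, x ^ 3 - 2 * x ^ 2 - x + 1 = 0 → x ≤ d) : 2 ≤ d := by
  obtain ⟨x, hx, hroot⟩ := exists_cubic_root_mem_Icc
  exact hx.1.trans (hmax x hroot)

theorem mul_self_eq_one_of_cubic_root {d s t : ℝ} (hroot : d ^ 3 - 2 * d ^ 2 - d + 1 = 0)
    (hs : s ^ 2 = d ^ 2 - d - 1) (ht : t ^ 2 = d) (hd : d ≠ 0) :
    !![1 / d, s / d, t / d;
       s / d, (d ^ 2 - d - 1) * (-d ^ 2 + 2 * d + 1) / d, s / t * (-d ^ 2 + d + 2);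
       t / d, s / t * (-d ^ 2 + d + 2), -d ^ 2 + d + 3] *
    !![1 / d, s / d, t / d;
       s / d, (d ^ 2 - d - 1) * (-d ^ 2 + 2 * d + 1) / d, s / t * (-d ^ 2 + d + 2);
       t / d, s / t * (-d ^ 2 + d + 2), -d ^ 2 + d + 3] = 1 := by
  have ht₀ : t ≠ 0 := by
    rintro rfl
    exact hd (by simpa using ht.symm)
  rw [Matrix.mul_fin_three, Matrix.one_fin_three, EmbeddingLike.apply_eq_iff_eq]
  simp only [Matrix.vecCons_inj, and_true]
  refine ⟨⟨?_, ?_, ?_⟩, ⟨?_, ?_, ?_⟩, ⟨?_, ?_, ?_⟩⟩ <;> grind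

theorem stmt_11 (d e r₁ r₂ r₃ : ℝ)
    (hroot : d ^ 3 - 2 * d ^ 2 - d + 1 = 0)
    (hmax : ∀ x : ℝ, x ^ 3 - 2 * x ^ 2 - x + 1 = 0 → x ≤ d)
    (he : e = d ^ 2 - d - 1)
    (hr₁ : r₁ = -d ^ 2 + 2 * d + 1)
    (hr₂ : r₂ = -d ^ 2 + d + 2)
    (hr₃ : r₃ = -d ^ 2 + d + 3)
    (U : Matrix (Fin 3) (Fin 3) ℝ)
    (hU : U = Matrix.of
      ![![1 / d, Real.sqrt e / d, Real.sqrt d / d],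
        ![Real.sqrt e / d, e * r₁ / d, Real.sqrt (e / d) * r₂],
        ![Real.sqrt d / d, Real.sqrt (e / d) * r₂, r₃]]) :
    U * U = 1 := by
  have hd : 2 ≤ d := two_le_of_forall_cubic_root_le hmax
  have he₀ : 0 ≤ e := by nlinarith
  rw [hU, Real.sqrt_div he₀]
  subst he hr₁ hr₂ hr₃
  exact mul_self_eq_one_of_cubic_root hroot (Real.sq_sqrt he₀) (Real.sq_sqrt (by linarith))
    (by positivity)
end

section
/- Let S = {4·cos²(π/n) : n ∈ ℕ, n ≥ 3} ∪ [4, ∞). For all a, b ∈ S with a > 1 and b > 1, the product a·b does not lie in the open interval (5, 3 + √5). -/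
private lemma key_13 (x : ℝ)
    (hx : x ∈ {x : ℝ | ∃ n : ℕ, 3 ≤ n ∧ x = 4 * Real.cos (Real.pi / n) ^ 2}
            ∪ Set.Ici 4) (h1 : 1 < x) :
    2 ≤ x ∧ (x < (3 + Real.sqrt 5) / 2 → x = 2) := by
  have s5 : Real.sqrt 5 ^ 2 = 5 := Real.sq_sqrt (by norm_num)
  have s5n : (0:ℝ) ≤ Real.sqrt 5 := Real.sqrt_nonneg 5
  rcases hx with ⟨n, hn, rfl⟩ | hx
  · -- trig case
    have hn4 : 4 ≤ n := by
      rcases eq_or_lt_of_le hn with h | h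
      · exfalso
        rw [← h] at h1
        norm_num [Real.cos_pi_div_three] at h1
      · omega
    have hπ : (0:ℝ) < Real.pi := Real.pi_pos
    have hcos4 : Real.cos (Real.pi / 4) ≤ Real.cos (Real.pi / n) := by
      apply Real.cos_le_cos_of_nonneg_of_le_pi
      · positivity
      · nlinarith
      · exact div_le_div_of_nonneg_left hπ.le (by norm_num) (by exact_mod_cast hn4)
    have c4 : Real.cos (Real.pi / 4) = Real.sqrt 2 / 2 := Real.cos_pi_div_four
    have s2 : Real.sqrt 2 ^ 2 = 2 := Real.sq_sqrt (by norm_num)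
    have s2n : (0:ℝ) ≤ Real.sqrt 2 := Real.sqrt_nonneg 2
    have h2 : (2:ℝ) ≤ 4 * Real.cos (Real.pi / n) ^ 2 := by
      nlinarith [hcos4]
    refine ⟨h2, fun hlt => ?_⟩
    rcases eq_or_lt_of_le hn4 with h | h
    · rw [← h]
      norm_num [Real.cos_pi_div_four]
      nlinarith
    · exfalso
      have hn5 : 5 ≤ n := h
      have hcos5 : Real.cos (Real.pi / 5) ≤ Real.cos (Real.pi / n) := by
        apply Real.cos_le_cos_of_nonneg_of_le_pi
        · positivity
        · nlinarith
        · exact div_le_div_of_nonneg_left hπ.le (by norm_num) (by exact_mod_cast hn5)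
      rw [Real.cos_pi_div_five] at hcos5
      nlinarith [hcos5]
  · refine ⟨by linarith [Set.mem_Ici.mp hx], fun hlt => ?_⟩
    have := Set.mem_Ici.mp hx
    nlinarith

theorem stmt_13 (S : Set ℝ)
    (hS : S = {x : ℝ | ∃ n : ℕ, 3 ≤ n ∧ x = 4 * Real.cos (Real.pi / n) ^ 2}
            ∪ Set.Ici 4) :
    ∀ a ∈ S, ∀ b ∈ S, 1 < a → 1 < b →
      ¬ (5 < a * b ∧ a * b < 3 + Real.sqrt 5) := by
  subst hS
  intro a ha b hb ha1 hb1 ⟨h5, hub⟩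
  have s5 : Real.sqrt 5 ^ 2 = 5 := Real.sq_sqrt (by norm_num)
  have s5n : (0:ℝ) ≤ Real.sqrt 5 := Real.sqrt_nonneg 5
  obtain ⟨ha2, haeq⟩ := key_13 a ha ha1
  obtain ⟨hb2, hbeq⟩ := key_13 b hb hb1
  have hA : a = 2 := haeq (by nlinarith)
  have hB : b = 2 := hbeq (by nlinarith)
  rw [hA, hB] at h5
  norm_num at h5
end
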